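/- Under the standing assumptions on the 3-block Bregman ADMM, for every k ≥ 1 the iterates satisfy ‖p^{k+1}−p^k‖ ≤ ( √2·(ℓ_h+ℓ₃)/√σ_C ) · ( ‖z^{k+1}−z^k‖ + ‖z^k−z^{k−1}‖ ). -/

import Mathlib

open RealInnerProductSpace Filter

noncomputable section

/-- Euclidean space `ℝ^n`. -/
abbrev Eu (n : ℕ) := EuclideanSpace ℝ (Fin n)

/-- The Bregman distance `Δ_φ(u,v) = φ(u) − φ(v) − ⟨∇φ(v), u−v⟩` associated with a
differentiable function `φ` whose gradient is `φ'`. -/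
def Breg {n : ℕ} (φ : Eu n → ℝ) (φ' : Eu n → Eu n) (u v : Eu n) : ℝ :=
  φ u - φ v - ⟪φ' v, u - v⟫

/-- `F` is `μ`-strongly convex iff `F − (μ/2)‖·‖²` is convex. -/
def StrongConvex {n : ℕ} (μ : ℝ) (F : Eu n → ℝ) : Prop :=
  ConvexOn ℝ Set.univ (fun u => F u - μ / 2 * ‖u‖ ^ 2)

/-- The augmented Lagrangian
`L_α(x,y,z,p) = f(x)+g(y)+h(z)+⟨p, Ax+By+Cz⟩+(α/2)‖Ax+By+Cz‖²`. -/
def Lag {n₁ n₂ n₃ m : ℕ} (f : Eu n₁ → ℝ) (g : Eu n₂ → ℝ) (h : Eu n₃ → ℝ)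
    (A : Eu n₁ →L[ℝ] Eu m) (B : Eu n₂ →L[ℝ] Eu m) (C : Eu n₃ →L[ℝ] Eu m)
    (α : ℝ) (x : Eu n₁) (y : Eu n₂) (z : Eu n₃) (p : Eu m) : ℝ :=
  f x + g y + h z + ⟪p, A x + B y + C z⟫ + α / 2 * ‖A x + B y + C z‖ ^ 2

/-- All the data and standing assumptions of the 3-block Bregman ADMM:
objective functions `f, g, h`, Bregman kernels `φ₁, φ₂, φ₃` (with gradients
`φ₁', φ₂', φ₃'`, and `h'` the gradient of `h`), matrices `A, B, C` (as linear maps),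
parameters, iterate sequences `x, y, z, p`, and the standing hypotheses
(lower semicontinuity of `f, g`; differentiability with Lipschitz gradients;
convexity of kernels; the strong-convexity alternatives; quantitative full row rank
of `C`; the lower bound on `α`; and the BADMM update rules, where each of the three
primal updates is a global minimizer of the corresponding subproblem). -/
structure BADMM (n₁ n₂ n₃ m : ℕ) where
  f : Eu n₁ → ℝ
  g : Eu n₂ → ℝ
  h : Eu n₃ → ℝ
  φ₁ : Eu n₁ → ℝ
  φ₂ : Eu n₂ → ℝ
  φ₃ : Eu n₃ → ℝ
  h' : Eu n₃ → Eu n₃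
  φ₁' : Eu n₁ → Eu n₁
  φ₂' : Eu n₂ → Eu n₂
  φ₃' : Eu n₃ → Eu n₃
  A : Eu n₁ →L[ℝ] Eu m
  B : Eu n₂ →L[ℝ] Eu m
  C : Eu n₃ →L[ℝ] Eu m
  α : ℝ
  ℓh : ℝ
  ℓ₁ : ℝ
  ℓ₂ : ℝ
  ℓ₃ : ℝ
  μ₁ : ℝ
  μ₂ : ℝ
  μ₃ : ℝ
  σC : ℝ
  x : ℕ → Eu n₁
  y : ℕ → Eu n₂
  z : ℕ → Eu n₃
  p : ℕ → Eu m
  hα_pos : 0 < α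
  hf_lsc : LowerSemicontinuous f
  hg_lsc : LowerSemicontinuous g
  hgrad_h : ∀ v, HasGradientAt h (h' v) v
  hgrad_φ₁ : ∀ v, HasGradientAt φ₁ (φ₁' v) v
  hgrad_φ₂ : ∀ v, HasGradientAt φ₂ (φ₂' v) v
  hgrad_φ₃ : ∀ v, HasGradientAt φ₃ (φ₃' v) v
  hℓh_nonneg : 0 ≤ ℓh
  hℓ₁_nonneg : 0 ≤ ℓ₁
  hℓ₂_nonneg : 0 ≤ ℓ₂
  hℓ₃_nonneg : 0 ≤ ℓ₃
  hlip_h : ∀ a b, ‖h' a - h' b‖ ≤ ℓh * ‖a - b‖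
  hlip_φ₁ : ∀ a b, ‖φ₁' a - φ₁' b‖ ≤ ℓ₁ * ‖a - b‖
  hlip_φ₂ : ∀ a b, ‖φ₂' a - φ₂' b‖ ≤ ℓ₂ * ‖a - b‖
  hlip_φ₃ : ∀ a b, ‖φ₃' a - φ₃' b‖ ≤ ℓ₃ * ‖a - b‖
  hφ₁_convex : ConvexOn ℝ Set.univ φ₁
  hφ₂_convex : ConvexOn ℝ Set.univ φ₂
  hφ₃_convex : ConvexOn ℝ Set.univ φ₃
  hμ₁_pos : 0 < μ₁
  hμ₂_pos : 0 < μ₂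
  hμ₃_pos : 0 < μ₃
  hsc₁ : StrongConvex μ₁ f ∨ StrongConvex μ₁ φ₁
  hsc₂ : StrongConvex μ₂ g ∨ StrongConvex μ₂ φ₂
  hsc₃ : StrongConvex μ₃ h ∨ StrongConvex μ₃ φ₃
  hσC_pos : 0 < σC
  hC_rank : ∀ u : Eu m, σC * ‖u‖ ^ 2 ≤ ‖(ContinuousLinearMap.adjoint C) u‖ ^ 2
  hα_large : 4 * ((ℓh + ℓ₃) ^ 2 + ℓ₃ ^ 2) / (μ₃ * σC) < α
  hx_min : ∀ k, ∀ ξ : Eu n₁,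
    Lag f g h A B C α (x (k+1)) (y k) (z k) (p k) + Breg φ₁ φ₁' (x (k+1)) (x k) ≤
      Lag f g h A B C α ξ (y k) (z k) (p k) + Breg φ₁ φ₁' ξ (x k)
  hy_min : ∀ k, ∀ ξ : Eu n₂,
    Lag f g h A B C α (x (k+1)) (y (k+1)) (z k) (p k) + Breg φ₂ φ₂' (y (k+1)) (y k) ≤
      Lag f g h A B C α (x (k+1)) ξ (z k) (p k) + Breg φ₂ φ₂' ξ (y k)
  hz_min : ∀ k, ∀ ξ : Eu n₃,
    Lag f g h A B C α (x (k+1)) (y (k+1)) (z (k+1)) (p k) + Breg φ₃ φ₃' (z (k+1)) (z k) ≤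
      Lag f g h A B C α (x (k+1)) (y (k+1)) ξ (p k) + Breg φ₃ φ₃' ξ (z k)
  hp_upd : ∀ k, p (k+1) = p k + α • (A (x (k+1)) + B (y (k+1)) + C (z (k+1)))

namespace BADMM

variable {n₁ n₂ n₃ m : ℕ} (P : BADMM n₁ n₂ n₃ m)

/-- `σ₀ = 2ℓ₃²/(ασ_C)`. -/
def σ0 : ℝ := 2 * P.ℓ₃ ^ 2 / (P.α * P.σC)

/-- `σ₁ = (1/2)·min(μ₁, μ₂, μ₃ − 4(ℓ_h+ℓ₃)²/(ασ_C) − 4ℓ₃²/(ασ_C))`. -/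
def σ1 : ℝ :=
  (1 / 2) * min P.μ₁ (min P.μ₂
    (P.μ₃ - 4 * (P.ℓh + P.ℓ₃) ^ 2 / (P.α * P.σC) - 4 * P.ℓ₃ ^ 2 / (P.α * P.σC)))

/-- The augmented Lagrangian of the problem, `L_α`. -/
def L (x : Eu n₁) (y : Eu n₂) (z : Eu n₃) (p : Eu m) : ℝ :=
  Lag P.f P.g P.h P.A P.B P.C P.α x y z p

/-- `L̂(x,y,z,p,ẑ) = L_α(x,y,z,p) + σ₀‖z−ẑ‖²`. -/
def Lhat (x : Eu n₁) (y : Eu n₂) (z : Eu n₃) (p : Eu m) (zh : Eu n₃) : ℝ :=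
  P.L x y z p + P.σ0 * ‖z - zh‖ ^ 2

/-- `‖w^{k+1}−w^k‖²`. -/
def dw2 (k : ℕ) : ℝ :=
  ‖P.x (k+1) - P.x k‖ ^ 2 + ‖P.y (k+1) - P.y k‖ ^ 2 +
    ‖P.z (k+1) - P.z k‖ ^ 2 + ‖P.p (k+1) - P.p k‖ ^ 2

end BADMM

/-!
The first-order optimality condition of the `z`-subproblem, combined with the dual update,
gives `Cᵀp^{k+1} = ∇φ₃(z^k) − ∇φ₃(z^{k+1}) − ∇h(z^{k+1})`. Subtracting two consecutive instances
and using the Lipschitz continuity of `∇h` and `∇φ₃` bounds `‖Cᵀ(p^{k+1} − p^k)‖` by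
`(ℓ_h + ℓ₃)(‖z^{k+1} − z^k‖ + ‖z^k − z^{k−1}‖)`, and the full row rank of `C` transfers this
bound to `p^{k+1} − p^k` at the price of the factor `1/√σ_C`.
-/

section Gradient

variable {E F : Type*} [NormedAddCommGroup E] [InnerProductSpace ℝ E] [CompleteSpace E]
  [NormedAddCommGroup F] [InnerProductSpace ℝ F] [CompleteSpace F]

theorem IsLocalMin.hasGradientAt_eq_zero {f : E → ℝ} {f' x : E} (hmin : IsLocalMin f x)
    (hf : HasGradientAt f f' x) : f' = 0 :=
  (InnerProductSpace.toDual ℝ E).map_eq_zero_iff.mp (hmin.hasFDerivAt_eq_zero hf.hasFDerivAt)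

theorem HasGradientAt.add {f g : E → ℝ} {f' g' x : E} (hf : HasGradientAt f f' x)
    (hg : HasGradientAt g g' x) : HasGradientAt (fun y => f y + g y) (f' + g') x := by
  rw [hasGradientAt_iff_hasFDerivAt, map_add]
  exact hf.hasFDerivAt.add hg.hasFDerivAt

theorem hasGradientAt_inner_add_norm_sq (T : E →L[ℝ] F) (p c : F) (α : ℝ) (x : E) :
    HasGradientAt (fun y => ⟪p, c + T y⟫ + α / 2 * ‖c + T y‖ ^ 2)
      (ContinuousLinearMap.adjoint T (p + α • (c + T x))) x := by
  have hT : HasFDerivAt (fun y => c + T y) T x := T.hasFDerivAt.const_add c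
  rw [hasGradientAt_iff_hasFDerivAt]
  refine (((hasFDerivAt_const p x).inner ℝ hT).add
    (hT.norm_sq.const_mul (α / 2))).congr_fderiv ?_
  ext u
  simp [ContinuousLinearMap.adjoint_inner_left, fderivInnerCLM_apply, real_inner_comm (T u)]
  ring

end Gradient

theorem hasGradientAt_breg {n : ℕ} {φ : Eu n → ℝ} {φ' : Eu n → Eu n} {x : Eu n}
    (hφ : HasGradientAt φ (φ' x) x) (v : Eu n) :
    HasGradientAt (fun y => Breg φ φ' y v) (φ' x - φ' v) x := by
  rw [hasGradientAt_iff_hasFDerivAt, map_sub]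
  refine (hφ.hasFDerivAt.sub_const _).sub
    (((hasFDerivAt_const (φ' v) x).inner ℝ ((hasFDerivAt_id x).sub_const v)).congr_fderiv ?_)
  ext u
  simp [fderivInnerCLM_apply]

theorem hasGradientAt_lag_right {n₁ n₂ n₃ m : ℕ} {f : Eu n₁ → ℝ} {g : Eu n₂ → ℝ}
    {h : Eu n₃ → ℝ} {h' : Eu n₃} (A : Eu n₁ →L[ℝ] Eu m) (B : Eu n₂ →L[ℝ] Eu m)
    (C : Eu n₃ →L[ℝ] Eu m) (α : ℝ) (x : Eu n₁) (y : Eu n₂) {z : Eu n₃} (p : Eu m)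
    (hh : HasGradientAt h h' z) :
    HasGradientAt (fun ζ => Lag f g h A B C α x y ζ p)
      (h' + ContinuousLinearMap.adjoint C (p + α • (A x + B y + C z))) z := by
  have := ((hasGradientAt_const (f x + g y) (x := z)).add hh).add
    (hasGradientAt_inner_add_norm_sq C p (A x + B y) α z)
  simpa [Lag, add_assoc] using this

theorem le_div_sqrt_of_mul_sq_le {a b σ : ℝ} (hσ : 0 < σ) (hb : 0 ≤ b)
    (h : σ * a ^ 2 ≤ b ^ 2) : a ≤ b / √σ := by
  rw [le_div_iff₀ (Real.sqrt_pos.mpr hσ)]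
  refine le_trans (le_abs_self _) (abs_le_of_sq_le_sq ?_ hb)
  rwa [mul_pow, Real.sq_sqrt hσ.le, mul_comm]

namespace BADMM

variable {n₁ n₂ n₃ m : ℕ} (P : BADMM n₁ n₂ n₃ m)

theorem adjoint_C_p_succ (k : ℕ) :
    ContinuousLinearMap.adjoint P.C (P.p (k + 1)) =
      P.φ₃' (P.z k) - P.φ₃' (P.z (k + 1)) - P.h' (P.z (k + 1)) := by
  have hmin : IsLocalMin (fun ξ => Lag P.f P.g P.h P.A P.B P.C P.α (P.x (k + 1)) (P.y (k + 1)) ξ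
      (P.p k) + Breg P.φ₃ P.φ₃' ξ (P.z k)) (P.z (k + 1)) :=
    Filter.Eventually.of_forall (P.hz_min k)
  have hstat := hmin.hasGradientAt_eq_zero
    ((hasGradientAt_lag_right P.A P.B P.C P.α _ _ (P.p k) (P.hgrad_h _)).add
      (hasGradientAt_breg (P.hgrad_φ₃ _) (P.z k)))
  rw [← P.hp_upd k] at hstat
  linear_combination (norm := module) hstat

theorem norm_adjoint_C_p_sub_le (k : ℕ) :
    ‖ContinuousLinearMap.adjoint P.C (P.p (k + 2) - P.p (k + 1))‖ ≤
      (P.ℓh + P.ℓ₃) * (‖P.z (k + 2) - P.z (k + 1)‖ + ‖P.z (k + 1) - P.z k‖) := by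
  rw [map_sub, P.adjoint_C_p_succ, P.adjoint_C_p_succ]
  calc _ = ‖(P.h' (P.z (k + 1)) - P.h' (P.z (k + 2)))
          + (P.φ₃' (P.z (k + 1)) - P.φ₃' (P.z (k + 2)))
          + (P.φ₃' (P.z (k + 1)) - P.φ₃' (P.z k))‖ := by congr 1; abel
    _ ≤ ‖P.h' (P.z (k + 1)) - P.h' (P.z (k + 2))‖
          + ‖P.φ₃' (P.z (k + 1)) - P.φ₃' (P.z (k + 2))‖
          + ‖P.φ₃' (P.z (k + 1)) - P.φ₃' (P.z k)‖ := norm_add₃_le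
    _ ≤ P.ℓh * ‖P.z (k + 1) - P.z (k + 2)‖ + P.ℓ₃ * ‖P.z (k + 1) - P.z (k + 2)‖
          + P.ℓ₃ * ‖P.z (k + 1) - P.z k‖ := by
        gcongr
        exacts [P.hlip_h _ _, P.hlip_φ₃ _ _, P.hlip_φ₃ _ _]
    _ ≤ _ := by
        rw [norm_sub_rev (P.z (k + 1)) (P.z (k + 2))]
        linarith [mul_nonneg P.hℓh_nonneg (norm_nonneg (P.z (k + 1) - P.z k))]

end BADMM

/-- norm bound on the successive dual differences. -/
theorem badmm_dual_diff_bound {n₁ n₂ n₃ m : ℕ} (P : BADMM n₁ n₂ n₃ m) :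
    ∀ k : ℕ, 1 ≤ k →
      ‖P.p (k+1) - P.p k‖ ≤
        (Real.sqrt 2 * (P.ℓh + P.ℓ₃) / Real.sqrt P.σC) *
          (‖P.z (k+1) - P.z k‖ + ‖P.z k - P.z (k-1)‖) := by
  intro k hk
  obtain ⟨j, rfl⟩ := Nat.exists_eq_add_of_le' hk
  have hL : 0 ≤ P.ℓh + P.ℓ₃ := add_nonneg P.hℓh_nonneg P.hℓ₃_nonneg
  calc ‖P.p (j + 1 + 1) - P.p (j + 1)‖
      ≤ (P.ℓh + P.ℓ₃) * (‖P.z (j + 1 + 1) - P.z (j + 1)‖ + ‖P.z (j + 1) - P.z j‖)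
          / √P.σC :=
        le_div_sqrt_of_mul_sq_le P.hσC_pos (by positivity) <| (P.hC_rank _).trans <|
          pow_le_pow_left₀ (norm_nonneg _) (P.norm_adjoint_C_p_sub_le j) 2
    _ ≤ _ := by
        rw [Nat.add_sub_cancel, div_mul_eq_mul_div, mul_assoc]
        exact div_le_div_of_nonneg_right
          (le_mul_of_one_le_left (by positivity) Real.one_lt_sqrt_two.le) (Real.sqrt_nonneg _)
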